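/- Let φ = ⋁ᵢ φᵢ and ψ = ⋁ᵢ' ψᵢ' be DNF formulas with no conjunctive clause containing complementary literals, and suppose φ ∧ ψ is unsatisfiable. Then for every pair (i, i') there exist literals ℓ in φᵢ and ℓ' in ψᵢ' with ℓ ∧ ℓ' unsatisfiable; choosing such a pair for each (i,i') and letting φ_P be the DNF obtained from φ by keeping in each φᵢ only its chosen literals, the formula φ_P is a Craig separator for φ, ψ. -/

import Mathlib

/-- A literal: an atom together with a polarity (`true` = positive). -/
abbrev Lit := ℕ × Bool

/-- Evaluation of a literal. -/
def litEval (v : ℕ → Bool) (ℓ : Lit) : Bool := if ℓ.2 then v ℓ.1 else !(v ℓ.1)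

/-- Evaluation of a conjunctive clause (list of literals, empty = ⊤). -/
def cclauseEval (v : ℕ → Bool) (c : List Lit) : Bool := c.all (litEval v)

/-- Evaluation of a DNF (list of conjunctive clauses, empty = ⊥). -/
def dnfEval (v : ℕ → Bool) (d : List (List Lit)) : Bool := d.any (cclauseEval v)

/-- Signature of a DNF: the set of atoms occurring in it. -/
def dnfSig (d : List (List Lit)) : Finset ℕ := (d.flatten.map Prod.fst).toFinset

/-- The complement of a literal. -/
def complit (ℓ : Lit) : Lit := (ℓ.1, !ℓ.2)

/-!
If clauses `c ∈ d` and `c' ∈ e` contained no literal of `c` whose complement lies in `c'`, then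
`c ++ c'` would be free of complementary literals, so the valuation making exactly the positive
atoms of `c ++ c'` true would satisfy both `d` and `e`. Given a choice of such pairs, clause `i`
of `d_P` is a subclause of clause `i` of `d`, whence `d ⊨ d_P`; and it contains, for every clause
`j` of `e`, the complement of a literal of that clause, whence `d_P ∧ e ⊨ ⊥`.
-/

def ClauseConsistent (c : List Lit) : Prop :=
  ∀ p : ℕ, ¬(((p, true) ∈ c) ∧ ((p, false) ∈ c))

lemma litEval_complit (v : ℕ → Bool) (ℓ : Lit) :
    litEval v (complit ℓ) = !litEval v ℓ := by
  rcases ℓ with ⟨p, b⟩; cases b <;> simp [litEval, complit]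

lemma cclauseEval_eq_true {v : ℕ → Bool} {c : List Lit} :
    cclauseEval v c = true ↔ ∀ ℓ ∈ c, litEval v ℓ = true := by
  simp [cclauseEval]

lemma dnfEval_eq_true {v : ℕ → Bool} {d : List (List Lit)} :
    dnfEval v d = true ↔ ∃ c ∈ d, cclauseEval v c = true := by
  simp [dnfEval]

lemma ClauseConsistent.cclauseEval_positiveAtoms {c : List Lit} (hc : ClauseConsistent c) :
    cclauseEval (fun p => decide ((p, true) ∈ c)) c = true := by
  refine cclauseEval_eq_true.2 fun ⟨p, b⟩ hpb => ?_
  cases b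
  · simpa [litEval] using fun hp => hc p ⟨hp, hpb⟩
  · simpa [litEval] using hpb

lemma ClauseConsistent.append {c c' : List Lit} (hc : ClauseConsistent c)
    (hc' : ClauseConsistent c') (hcross : ∀ ℓ ∈ c, complit ℓ ∉ c') :
    ClauseConsistent (c ++ c') := by
  rintro p ⟨hpos, hneg⟩
  rcases List.mem_append.1 hpos with hpos | hpos <;> rcases List.mem_append.1 hneg with hneg | hneg
  · exact hc p ⟨hpos, hneg⟩
  · exact hcross (p, true) hpos hneg
  · exact hcross (p, false) hneg hpos
  · exact hc' p ⟨hpos, hneg⟩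

lemma exists_complit_mem_of_unsat {c c' : List Lit} (hc : ClauseConsistent c)
    (hc' : ClauseConsistent c')
    (hunsat : ∀ v : ℕ → Bool, ¬(cclauseEval v c = true ∧ cclauseEval v c' = true)) :
    ∃ ℓ ∈ c, complit ℓ ∈ c' := by
  by_contra! hcross
  have hsat := (hc.append hc' hcross).cclauseEval_positiveAtoms
  simp only [cclauseEval, List.all_append, Bool.and_eq_true] at hsat
  exact hunsat _ hsat

lemma dnfEval_ofFn_of_subclauses {d : List (List Lit)} {m : ℕ} {ch : Fin d.length → Fin m → Lit}
    (hch : ∀ i j, ch i j ∈ d.get i) {v : ℕ → Bool} (hv : dnfEval v d = true) :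
    dnfEval v (List.ofFn fun i => List.ofFn fun j => ch i j) = true := by
  obtain ⟨c, hc, hcv⟩ := dnfEval_eq_true.1 hv
  obtain ⟨i, rfl⟩ := List.mem_iff_get.1 hc
  refine dnfEval_eq_true.2 ⟨_, List.mem_ofFn.2 ⟨i, rfl⟩, cclauseEval_eq_true.2 fun ℓ hℓ => ?_⟩
  obtain ⟨j, rfl⟩ := List.mem_ofFn.1 hℓ
  exact cclauseEval_eq_true.1 hcv _ (hch i j)

lemma not_dnfEval_ofFn_and_of_complit_mem {e : List (List Lit)} {n : ℕ}
    {ch : Fin n → Fin e.length → Lit} (hch : ∀ i j, complit (ch i j) ∈ e.get j) (v : ℕ → Bool) :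
    ¬(dnfEval v (List.ofFn fun i => List.ofFn fun j => ch i j) = true ∧ dnfEval v e = true) := by
  rintro ⟨hP, he⟩
  obtain ⟨_, hc, hcv⟩ := dnfEval_eq_true.1 hP
  obtain ⟨i, rfl⟩ := List.mem_ofFn.1 hc
  obtain ⟨c', hc', hcv'⟩ := dnfEval_eq_true.1 he
  obtain ⟨j, rfl⟩ := List.mem_iff_get.1 hc'
  have hpos := cclauseEval_eq_true.1 hcv _ (List.mem_ofFn.2 ⟨j, rfl⟩)
  have hneg := cclauseEval_eq_true.1 hcv' _ (hch i j)
  simp [litEval_complit, hpos] at hneg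

lemma fst_mem_dnfSig {d : List (List Lit)} {c : List Lit} {ℓ : Lit} (hc : c ∈ d) (hℓ : ℓ ∈ c) :
    ℓ.1 ∈ dnfSig d :=
  List.mem_toFinset.2 (List.mem_map_of_mem (List.mem_flatten.2 ⟨c, hc, hℓ⟩))

lemma exists_eq_of_mem_dnfSig_ofFn {n m : ℕ} {ch : Fin n → Fin m → Lit} {p : ℕ}
    (hp : p ∈ dnfSig (List.ofFn fun i => List.ofFn fun j => ch i j)) :
    ∃ i j, (ch i j).1 = p := by
  simp only [dnfSig, List.mem_toFinset, List.mem_map, List.mem_flatten, List.mem_ofFn] at hp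
  obtain ⟨_, ⟨_, ⟨i, rfl⟩, hj⟩, rfl⟩ := hp
  obtain ⟨j, rfl⟩ := List.mem_ofFn.1 hj
  exact ⟨i, j, rfl⟩

/-- For DNFs `d`, `e` without complementary literals inside any conjunctive clause and
with `d ∧ e` unsatisfiable: each pair of clauses contains a cross-complementary pair of
literals, and for any choice `ch` of such pairs, the DNF `d_P` keeping in each clause of
`d` only its chosen literals is a Craig separator for `d, e`. -/
theorem dnf_separator (d e : List (List Lit))
    (hd : ∀ c ∈ d, ∀ p : ℕ, ¬(((p, true) ∈ c) ∧ ((p, false) ∈ c)))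
    (he : ∀ c ∈ e, ∀ p : ℕ, ¬(((p, true) ∈ c) ∧ ((p, false) ∈ c)))
    (hunsat : ∀ v : ℕ → Bool, ¬(dnfEval v d = true ∧ dnfEval v e = true)) :
    (∀ (i : Fin d.length) (j : Fin e.length),
        ∃ ℓ ∈ d.get i, complit ℓ ∈ e.get j) ∧
    (∀ ch : Fin d.length → Fin e.length → Lit,
      (∀ i j, ch i j ∈ d.get i ∧ complit (ch i j) ∈ e.get j) →
      (∀ v : ℕ → Bool, dnfEval v d = true →
          dnfEval v (List.ofFn fun i => List.ofFn fun j => ch i j) = true) ∧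
      (∀ v : ℕ → Bool,
          ¬(dnfEval v (List.ofFn fun i => List.ofFn fun j => ch i j) = true ∧
            dnfEval v e = true)) ∧
      dnfSig (List.ofFn fun i => List.ofFn fun j => ch i j) ⊆ dnfSig d ∩ dnfSig e) := by
  refine ⟨fun i j => ?_, fun ch hch => ?_⟩
  · refine exists_complit_mem_of_unsat (hd _ (List.get_mem d i)) (he _ (List.get_mem e j))
      fun v ⟨hcv, hcv'⟩ => hunsat v ⟨?_, ?_⟩
    · exact dnfEval_eq_true.2 ⟨_, List.get_mem d i, hcv⟩
    · exact dnfEval_eq_true.2 ⟨_, List.get_mem e j, hcv'⟩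
  refine ⟨fun v => dnfEval_ofFn_of_subclauses fun i j => (hch i j).1,
    not_dnfEval_ofFn_and_of_complit_mem fun i j => (hch i j).2, fun p hp => ?_⟩
  obtain ⟨i, j, rfl⟩ := exists_eq_of_mem_dnfSig_ofFn hp
  exact Finset.mem_inter.2 ⟨fst_mem_dnfSig (List.get_mem d i) (hch i j).1,
    fst_mem_dnfSig (ℓ := complit _) (List.get_mem e j) (hch i j).2⟩
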